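/- arXiv:math/0405228 — 5 statements merged into one kernel-verified Lean document; each statement's English description precedes it below -/
import Mathlib

section
/- For 0 < L < 1 and c = (1-L)/(1+L), the function u(x) = L^{-1} arcsin((1 - c e^{2L(1-x)})/(1 + c e^{2L(1-x)})) satisfies the differential equation u''(x) = L cot(L u(x)) (u'(x)^2 - 1) for all x > 1. -/
open Real

theorem noded_solution_satisfies_ODE (L : ℝ) (hL0 : 0 < L) (hL1 : L < 1)
    (c : ℝ) (hc : c = (1 - L) / (1 + L))
    (u : ℝ → ℝ)
    (hu : ∀ x : ℝ, u x =
      L⁻¹ * Real.arcsin ((1 - c * Real.exp (2 * L * (1 - x))) /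
        (1 + c * Real.exp (2 * L * (1 - x))))) :
    ∀ x : ℝ, 1 < x →
      deriv (deriv u) x =
        L * (Real.cos (L * u x) / Real.sin (L * u x)) * ((deriv u x) ^ 2 - 1) := by
  have hL : L ≠ 0 := ne_of_gt hL0
  have hc0 : 0 < c := by
    rw [hc]; apply div_pos <;> linarith
  have hc1 : c < 1 := by
    rw [hc, div_lt_one (by linarith)]; linarith
  set s : ℝ → ℝ := fun x => c * Real.exp (2 * L * (1 - x)) with hsdef
  have hspos : ∀ x, 0 < s x := fun x => mul_pos hc0 (Real.exp_pos _)
  have hden : ∀ x, 0 < 1 + s x := fun x => by have := hspos x; linarith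
  set f : ℝ → ℝ := fun x => (1 - s x) / (1 + s x) with hfdef
  have hf_lt : ∀ x, f x < 1 := by
    intro x
    rw [hfdef]
    rw [div_lt_one (hden x)]
    have := hspos x; linarith
  have hf_gt : ∀ x, -1 < f x := by
    intro x
    rw [hfdef]
    rw [lt_div_iff₀ (hden x)]
    have := hspos x; linarith
  have hs' : ∀ x, HasDerivAt s (-(2 * L) * s x) x := by
    intro x
    have h1 : HasDerivAt (fun x : ℝ => 2 * L * (1 - x)) (-(2 * L)) x := by
      have := ((hasDerivAt_id x).const_sub 1).const_mul (2 * L)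
      simpa using this
    have := (h1.exp).const_mul c
    simpa [hsdef, mul_comm, mul_left_comm, mul_assoc] using this
  have hf' : ∀ x, HasDerivAt f (4 * L * s x / (1 + s x) ^ 2) x := by
    intro x
    have h1 : HasDerivAt (fun x => 1 - s x) (2 * L * s x) x := by
      simpa using ((hs' x).const_sub 1)
    have h2 : HasDerivAt (fun x => 1 + s x) (-(2 * L) * s x) x := by
      simpa using ((hs' x).const_add 1)
    have := h1.div h2 (ne_of_gt (hden x))
    refine this.congr_deriv ?_
    have := (hden x).ne'
    field_simp
    ring
  have hsqrt : ∀ x, Real.sqrt (1 - f x ^ 2) = 2 * Real.sqrt (s x) / (1 + s x) := by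
    intro x
    have h1 : 1 - f x ^ 2 = (2 * Real.sqrt (s x) / (1 + s x)) ^ 2 := by
      rw [hfdef]
      have hsq : Real.sqrt (s x) ^ 2 = s x := Real.sq_sqrt (le_of_lt (hspos x))
      have := (hden x).ne'
      field_simp
      nlinarith [hsq]
    rw [h1, Real.sqrt_sq (by positivity)]
  have huf : u = fun x => L⁻¹ * Real.arcsin (f x) := by
    funext x; rw [hu x]
  have hu' : ∀ x, HasDerivAt u (2 * Real.sqrt (s x) / (1 + s x)) x := by
    intro x
    have harc : HasDerivAt Real.arcsin (1 / Real.sqrt (1 - f x ^ 2)) (f x) :=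
      Real.hasDerivAt_arcsin (ne_of_gt (hf_gt x)) (ne_of_lt (hf_lt x))
    have hcomp := (harc.comp x (hf' x)).const_mul L⁻¹
    simp only [Function.comp] at hcomp
    rw [← huf] at hcomp
    refine hcomp.congr_deriv ?_
    rw [hsqrt x]
    have hsq : Real.sqrt (s x) * Real.sqrt (s x) = s x :=
      Real.mul_self_sqrt (le_of_lt (hspos x))
    have hsqrtpos : 0 < Real.sqrt (s x) := Real.sqrt_pos.mpr (hspos x)
    have := (hden x).ne'
    field_simp
    linear_combination (-4) * hsq
  have hLu : ∀ x, L * u x = Real.arcsin (f x) := by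
    intro x; rw [hu x, ← mul_assoc, mul_inv_cancel₀ hL, one_mul]
  have hcos : ∀ x, Real.cos (L * u x) = 2 * Real.sqrt (s x) / (1 + s x) := by
    intro x
    rw [hLu x, Real.cos_arcsin]
    exact hsqrt x
  have hsin : ∀ x, Real.sin (L * u x) = f x := by
    intro x
    rw [hLu x, Real.sin_arcsin (le_of_lt (hf_gt x)) (le_of_lt (hf_lt x))]
  have hderiv : deriv u = fun x => Real.cos (L * u x) := by
    funext x
    rw [(hu' x).deriv, hcos x]
  intro x hx
  have hs1 : s x < 1 := by
    have hexp : Real.exp (2 * L * (1 - x)) < 1 := by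
      rw [Real.exp_lt_one_iff]
      nlinarith
    calc s x = c * Real.exp (2 * L * (1 - x)) := rfl
      _ < c * 1 := by exact mul_lt_mul_of_pos_left hexp hc0
      _ ≤ 1 := by linarith
  have hfpos : 0 < f x := by
    rw [hfdef]
    apply div_pos (by linarith) (hden x)
  have hsinne : Real.sin (L * u x) ≠ 0 := by
    rw [hsin x]; exact ne_of_gt hfpos
  have h2 : HasDerivAt (fun y => Real.cos (L * u y))
      (-Real.sin (L * u x) * (L * (2 * Real.sqrt (s x) / (1 + s x)))) x := by
    have hLux : HasDerivAt (fun y => L * u y) (L * (2 * Real.sqrt (s x) / (1 + s x))) x :=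
      (hu' x).const_mul L
    exact hLux.cos
  rw [hderiv]
  rw [h2.deriv]
  have hcu : Real.cos (L * u x) = 2 * Real.sqrt (s x) / (1 + s x) := hcos x
  have hpy : Real.sin (L * u x) ^ 2 + Real.cos (L * u x) ^ 2 = 1 :=
    Real.sin_sq_add_cos_sq _
  rw [← hcu]
  have h3 : Real.cos (L * u x) ^ 2 - 1 = -Real.sin (L * u x) ^ 2 := by linarith [hpy]
  rw [h3]
  field_simp
end

section
/- If u : [a,b] → (0, π/L) is twice differentiable and satisfies u'' = L cot(Lu)(u'^2 - 1), then the quantity c(x) = L^2 csc^2(L u(x)) (u'(x)^2 - 1) is constant on [a,b]. -/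
open Real Set

theorem hopf_differential_constant (L a b : ℝ) (hL : 0 < L) (hab : a ≤ b)
    (u u' u'' : ℝ → ℝ)
    (hrange : ∀ x ∈ Icc a b, u x ∈ Ioo (0 : ℝ) (Real.pi / L))
    (hu : ∀ x ∈ Icc a b, HasDerivAt u (u' x) x)
    (hu' : ∀ x ∈ Icc a b, HasDerivAt u' (u'' x) x)
    (hODE : ∀ x ∈ Icc a b,
      u'' x = L * (Real.cos (L * u x) / Real.sin (L * u x)) * ((u' x) ^ 2 - 1)) :
    ∀ x ∈ Icc a b, ∀ y ∈ Icc a b,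
      L ^ 2 * (1 / Real.sin (L * u x)) ^ 2 * ((u' x) ^ 2 - 1) =
      L ^ 2 * (1 / Real.sin (L * u y)) ^ 2 * ((u' y) ^ 2 - 1) := by
  have hsin : ∀ t ∈ Icc a b, 0 < Real.sin (L * u t) := by
    intro t ht
    have h := hrange t ht
    apply Real.sin_pos_of_pos_of_lt_pi
    · exact mul_pos hL h.1
    · calc L * u t < L * (Real.pi / L) := (mul_lt_mul_iff_right₀ hL).2 h.2
        _ = Real.pi := by field_simp
  set g : ℝ → ℝ := fun t => L ^ 2 * ((u' t) ^ 2 - 1) / (Real.sin (L * u t)) ^ 2 with hg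
  have hderiv : ∀ t ∈ Icc a b, HasDerivAt g 0 t := by
    intro t ht
    have hs : Real.sin (L * u t) ≠ 0 := (hsin t ht).ne'
    have h1 : HasDerivAt (fun x => Real.sin (L * u x))
        (Real.cos (L * u t) * (L * u' t)) t :=
      by have := (Real.hasDerivAt_sin (L * u t)).comp t ((hu t ht).const_mul L); exact this
    have h2 : HasDerivAt (fun x => (Real.sin (L * u x)) ^ 2)
        (2 * Real.sin (L * u t) * (Real.cos (L * u t) * (L * u' t))) t := by
      have := h1.fun_pow 2
      simpa [mul_comm, mul_assoc, mul_left_comm] using this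
    have h3 : HasDerivAt (fun x => L ^ 2 * ((u' x) ^ 2 - 1))
        (L ^ 2 * (2 * u' t * u'' t)) t := by
      have := (((hu' t ht).pow 2).sub_const 1).const_mul (L ^ 2)
      simpa [mul_comm, mul_assoc, mul_left_comm] using this
    have h4 := h3.fun_div h2 (pow_ne_zero 2 hs)
    refine h4.congr_deriv ?_
    rw [hODE t ht]
    field_simp
    ring
  have hcont : ContinuousOn g (Icc a b) := fun t ht =>
    (hderiv t ht).continuousAt.continuousWithinAt
  have key : ∀ t ∈ Icc a b, g t = g a := by
    apply constant_of_has_deriv_right_zero hcont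
    intro t ht
    exact ((hderiv t (Ico_subset_Icc_self ht)).hasDerivWithinAt)
  intro x hx y hy
  have ex : L ^ 2 * (1 / Real.sin (L * u x)) ^ 2 * ((u' x) ^ 2 - 1) = g x := by
    rw [hg]; ring
  have ey : L ^ 2 * (1 / Real.sin (L * u y)) ^ 2 * ((u' y) ^ 2 - 1) = g y := by
    rw [hg]; ring
  rw [ex, ey, key x hx, key y hy]
end

section
/- There exist constants C > 0 and l_0 > 0 such that for all 0 < l < l_0, with a = arcsin(l)/l and b = π/l - arcsin(l)/l, |∫_a^b (1 - l x cot(lx)) · l^{-2} sin^2(lx) dx| ≤ C l^{-3}. -/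
open Real

theorem second_homogeneous_term_integral_bound :
    ∃ C : ℝ, 0 < C ∧ ∃ l₀ : ℝ, 0 < l₀ ∧ ∀ l : ℝ, 0 < l → l < l₀ →
      |∫ x in (Real.arcsin l / l)..(Real.pi / l - Real.arcsin l / l),
          (1 - l * x * (Real.cos (l * x) / Real.sin (l * x))) *
            (l⁻¹ ^ 2 * Real.sin (l * x) ^ 2)| ≤
        C * l⁻¹ ^ 3 := by
  refine ⟨Real.pi * (1 + Real.pi), by positivity, 1, one_pos, fun l hl hl1 => ?_⟩
  set a := Real.arcsin l / l with ha
  set b := Real.pi / l - Real.arcsin l / l with hb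
  have harcsin_nonneg : 0 ≤ Real.arcsin l := Real.arcsin_nonneg.2 hl.le
  have harcsin_le : Real.arcsin l ≤ Real.pi / 2 := Real.arcsin_le_pi_div_two l
  have hle : a ≤ b := by
    rw [ha, hb, le_sub_iff_add_le]
    rw [← add_div, div_le_div_iff₀ hl hl]
    nlinarith
  have key : ∀ x ∈ Set.uIoc a b,
      ‖(1 - l * x * (Real.cos (l * x) / Real.sin (l * x))) *
        (l⁻¹ ^ 2 * Real.sin (l * x) ^ 2)‖ ≤ (1 + Real.pi) * l⁻¹ ^ 2 := by
    intro x hx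
    rw [Set.uIoc_of_le hle] at hx
    have hxu : |l * x| ≤ Real.pi := by
      rw [abs_le]
      constructor
      · have : 0 ≤ l * x := by
          have := hx.1
          have hax : 0 ≤ a := by positivity
          nlinarith
        linarith [Real.pi_pos]
      · have := hx.2
        rw [hb, le_sub_iff_add_le] at this
        have h2 : l * x ≤ l * b := by nlinarith [hx.2]
        rw [hb] at h2
        have : l * (Real.pi / l - Real.arcsin l / l) = Real.pi - Real.arcsin l := by
          field_simp
        nlinarith
    set u := l * x
    have hs1 : |Real.sin u| ≤ 1 := Real.abs_sin_le_one u
    have hc1 : |Real.cos u| ≤ 1 := Real.abs_cos_le_one u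
    rw [Real.norm_eq_abs]
    rcases eq_or_ne (Real.sin u) 0 with hs | hs
    · simp [hs]
      positivity
    · have heq : (1 - u * (Real.cos u / Real.sin u)) * (l⁻¹ ^ 2 * Real.sin u ^ 2)
          = l⁻¹ ^ 2 * (Real.sin u ^ 2 - u * Real.cos u * Real.sin u) := by
        field_simp
      rw [heq, abs_mul, abs_of_nonneg (by positivity : (0:ℝ) ≤ l⁻¹ ^ 2), mul_comm]
      have h1 : |Real.sin u ^ 2 - u * Real.cos u * Real.sin u| ≤ 1 + Real.pi := by
        calc |Real.sin u ^ 2 - u * Real.cos u * Real.sin u|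
            ≤ |Real.sin u ^ 2| + |u * Real.cos u * Real.sin u| := abs_sub _ _
          _ ≤ 1 + Real.pi := by
              rw [abs_mul, abs_mul, abs_pow]
              have := Real.pi_pos
              have e1 : |Real.sin u| ^ 2 ≤ 1 := by nlinarith [abs_nonneg (Real.sin u)]
              have e2 : |u| * |Real.cos u| * |Real.sin u| ≤ Real.pi * 1 * 1 :=
                mul_le_mul (mul_le_mul hxu hc1 (abs_nonneg _) Real.pi_pos.le) hs1
                  (abs_nonneg _) (by positivity)
              nlinarith
      exact mul_le_mul_of_nonneg_right h1 (by positivity)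
  have hmain := intervalIntegral.norm_integral_le_of_norm_le_const key
  rw [Real.norm_eq_abs] at hmain
  have hba : |b - a| ≤ Real.pi / l := by
    rw [abs_of_nonneg (by linarith), hb, ha]
    have : Real.pi / l - Real.arcsin l / l - Real.arcsin l / l ≤ Real.pi / l := by
      have : 0 ≤ Real.arcsin l / l := by positivity
      linarith
    linarith
  calc |∫ x in a..b, (1 - l * x * (Real.cos (l * x) / Real.sin (l * x))) *
          (l⁻¹ ^ 2 * Real.sin (l * x) ^ 2)|
      ≤ (1 + Real.pi) * l⁻¹ ^ 2 * |b - a| := hmain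
    _ ≤ (1 + Real.pi) * l⁻¹ ^ 2 * (Real.pi / l) := by
        have : (0:ℝ) ≤ (1 + Real.pi) * l⁻¹ ^ 2 := by positivity
        exact mul_le_mul_of_nonneg_left hba this
    _ = Real.pi * (1 + Real.pi) * l⁻¹ ^ 3 := by
        field_simp
end

section
/- There exist constants C > 0 and l_0 > 0 such that for all 0 < l < l_0, with a = arcsin(l)/l, ∫_a^{π/(2l)} (sin^2(lx)/(2l^4) + |A_2| cot(lx) + |A_3| |1 - lx cot(lx)|) · l^{-2} sin^2(lx) · x^{-8} dx ≤ C l^{-2}, whenever |A_2| ≤ l^{-1} and |A_3| ≤ l^{-1}. -/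
open Real

private lemma ptbd (l x A₂ A₃ : ℝ) (hl : 0 < l) (hl1 : l < 1)
    (hA2 : |A₂| ≤ l⁻¹) (hA3 : |A₃| ≤ l⁻¹) (hx1 : 1 ≤ x)
    (hslb : l ≤ Real.sin (l * x)) (hsub : Real.sin (l * x) ≤ l * x)
    (hc0 : 0 ≤ Real.cos (l * x)) (hc1 : Real.cos (l * x) ≤ 1) :
    (Real.sin (l * x) ^ 2 / (2 * l ^ 4) +
        |A₂| * (Real.cos (l * x) / Real.sin (l * x)) +
        |A₃| * |1 - l * x * (Real.cos (l * x) / Real.sin (l * x))|) *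
      (l⁻¹ ^ 2 * Real.sin (l * x) ^ 2) * (x⁻¹) ^ 8
      ≤ 7 / 2 * l⁻¹ ^ 2 * x ^ (-4 : ℤ) := by
  set s := Real.sin (l * x) with hs_def
  set c := Real.cos (l * x) with hc_def
  have hs : 0 < s := lt_of_lt_of_le hl hslb
  have hx0 : 0 < x := lt_of_lt_of_le one_pos hx1
  have hu0 : 0 ≤ l * x * (c / s) := by positivity
  have habs : |1 - l * x * (c / s)| ≤ 1 + l * x * (c / s) := by
    rw [abs_le]; constructor <;> linarith
  have key : (s ^ 2 / (2 * l ^ 4) + |A₂| * (c / s) + |A₃| * |1 - l * x * (c / s)|) * s ^ 2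
      ≤ 7 / 2 * x ^ 4 := by
    have e1 : (s ^ 2 / (2 * l ^ 4) + |A₂| * (c / s) + |A₃| * |1 - l * x * (c / s)|) * s ^ 2
        = s ^ 4 / (2 * l ^ 4) + |A₂| * (c * s) + |A₃| * |1 - l * x * (c / s)| * s ^ 2 := by
      field_simp
    rw [e1]
    have h1 : s ^ 4 / (2 * l ^ 4) ≤ x ^ 4 / 2 := by
      rw [div_le_div_iff₀ (by positivity) (by norm_num)]
      have : s ^ 4 ≤ (l * x) ^ 4 := pow_le_pow_left₀ hs.le hsub 4
      nlinarith [pow_pos hl 4]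
    have h2 : |A₂| * (c * s) ≤ x := by
      have hcs : c * s ≤ l * x := by nlinarith
      have hcs0 : 0 ≤ c * s := by positivity
      calc |A₂| * (c * s) ≤ l⁻¹ * (l * x) :=
            mul_le_mul hA2 hcs hcs0 (by positivity)
        _ = x := by field_simp
    have h3 : |A₃| * |1 - l * x * (c / s)| * s ^ 2 ≤ 2 * l * x ^ 2 := by
      have step1 : |A₃| * |1 - l * x * (c / s)| * s ^ 2
          ≤ l⁻¹ * ((1 + l * x * (c / s)) * s ^ 2) := by
        have h := mul_le_mul (mul_le_mul hA3 habs (abs_nonneg _) (by positivity))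
          (le_refl (s ^ 2)) (by positivity) (by positivity)
        calc |A₃| * |1 - l * x * (c / s)| * s ^ 2
            ≤ l⁻¹ * (1 + l * x * (c / s)) * s ^ 2 := h
          _ = l⁻¹ * ((1 + l * x * (c / s)) * s ^ 2) := by ring
      have e2 : (1 + l * x * (c / s)) * s ^ 2 = s ^ 2 + l * x * (c * s) := by
        field_simp
      have hs2 : s ^ 2 ≤ (l * x) ^ 2 := by nlinarith
      have hcs : c * s ≤ l * x := by nlinarith
      calc |A₃| * |1 - l * x * (c / s)| * s ^ 2
          ≤ l⁻¹ * (s ^ 2 + l * x * (c * s)) := by rw [← e2]; exact step1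
        _ ≤ l⁻¹ * ((l * x) ^ 2 + l * x * (l * x)) := by
            apply mul_le_mul_of_nonneg_left _ (by positivity)
            have : l * x * (c * s) ≤ l * x * (l * x) :=
              mul_le_mul_of_nonneg_left hcs (by positivity)
            linarith
        _ = 2 * l * x ^ 2 := by field_simp; ring
    have hx4 : x ≤ x ^ 4 := le_self_pow₀ hx1 (by norm_num)
    have hx24 : x ^ 2 ≤ x ^ 4 := pow_le_pow_right₀ hx1 (by norm_num)
    nlinarith
  have e3 : (s ^ 2 / (2 * l ^ 4) + |A₂| * (c / s) + |A₃| * |1 - l * x * (c / s)|) *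
      (l⁻¹ ^ 2 * s ^ 2) * (x⁻¹) ^ 8
      = ((s ^ 2 / (2 * l ^ 4) + |A₂| * (c / s) + |A₃| * |1 - l * x * (c / s)|) * s ^ 2)
        * (l⁻¹ ^ 2 * (x⁻¹) ^ 8) := by ring
  rw [e3]
  have hpos : (0:ℝ) ≤ l⁻¹ ^ 2 * (x⁻¹) ^ 8 := by positivity
  calc ((s ^ 2 / (2 * l ^ 4) + |A₂| * (c / s) + |A₃| * |1 - l * x * (c / s)|) * s ^ 2)
        * (l⁻¹ ^ 2 * (x⁻¹) ^ 8)
      ≤ 7 / 2 * x ^ 4 * (l⁻¹ ^ 2 * (x⁻¹) ^ 8) := mul_le_mul_of_nonneg_right key hpos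
    _ = 7 / 2 * l⁻¹ ^ 2 * x ^ (-4 : ℤ) := by
        rw [zpow_neg, zpow_ofNat]
        field_simp

theorem cross_curvature_term_order :
    ∃ C : ℝ, 0 < C ∧ ∃ l₀ : ℝ, 0 < l₀ ∧ ∀ l : ℝ, 0 < l → l < l₀ →
      ∀ A₂ A₃ : ℝ, |A₂| ≤ l⁻¹ → |A₃| ≤ l⁻¹ →
      (∫ x in (Real.arcsin l / l)..(Real.pi / (2 * l)),
          (Real.sin (l * x) ^ 2 / (2 * l ^ 4) +
            |A₂| * (Real.cos (l * x) / Real.sin (l * x)) +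
            |A₃| * |1 - l * x * (Real.cos (l * x) / Real.sin (l * x))|) *
          (l⁻¹ ^ 2 * Real.sin (l * x) ^ 2) * (x⁻¹) ^ 8) ≤ C * l⁻¹ ^ 2 := by
  refine ⟨2, by norm_num, 1, by norm_num, ?_⟩
  intro l hl hl1 A₂ A₃ hA2 hA3
  set a := Real.arcsin l / l with ha_def
  set b := Real.pi / (2 * l) with hb_def
  have hpi : (2:ℝ) ≤ Real.pi := Real.two_le_pi
  have hl2 : l < Real.pi / 2 := lt_of_lt_of_le hl1 (by linarith)
  have harc_ge : l ≤ Real.arcsin l :=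
    (Real.le_arcsin_iff_sin_le' ⟨by linarith [Real.pi_div_two_pos], hl2.le⟩).mpr
      (Real.sin_lt hl).le
  have harc_le : Real.arcsin l ≤ Real.pi / 2 := Real.arcsin_le_pi_div_two l
  have ha1 : 1 ≤ a := (one_le_div hl).mpr harc_ge
  have hab : a ≤ b := by
    rw [ha_def, hb_def, div_le_div_iff₀ hl (by positivity)]
    nlinarith
  have huIcc : Set.uIcc a b = Set.Icc a b := Set.uIcc_of_le hab
  have hxne : ∀ x ∈ Set.uIcc a b, x ≠ 0 := by
    intro x hx
    rw [huIcc] at hx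
    have : (1:ℝ) ≤ x := le_trans ha1 hx.1
    linarith
  have hfacts : ∀ x ∈ Set.Icc a b, 1 ≤ x ∧ l ≤ Real.sin (l * x) ∧
      Real.sin (l * x) ≤ l * x ∧ 0 ≤ Real.cos (l * x) := by
    intro x hx
    have hx1 : 1 ≤ x := le_trans ha1 hx.1
    have hlx_pos : 0 < l * x := by positivity
    have hlx_le : l * x ≤ Real.pi / 2 := by
      have h1 : l * x ≤ l * b := mul_le_mul_of_nonneg_left hx.2 hl.le
      have h2 : l * b = Real.pi / 2 := by rw [hb_def]; field_simp
      linarith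
    have harc_lx : Real.arcsin l ≤ l * x := by
      have h1 : l * a ≤ l * x := mul_le_mul_of_nonneg_left hx.1 hl.le
      have h2 : l * a = Real.arcsin l := by rw [ha_def]; field_simp
      linarith
    have hslb : l ≤ Real.sin (l * x) := by
      have h1 : Real.sin (Real.arcsin l) ≤ Real.sin (l * x) :=
        Real.sin_le_sin_of_le_of_le_pi_div_two (Real.neg_pi_div_two_le_arcsin l) hlx_le harc_lx
      rwa [Real.sin_arcsin (by linarith) hl1.le] at h1
    exact ⟨hx1, hslb, (Real.sin_lt hlx_pos).le,
      Real.cos_nonneg_of_mem_Icc ⟨by linarith, hlx_le⟩⟩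
  have hsne : ∀ x ∈ Set.uIcc a b, Real.sin (l * x) ≠ 0 := by
    intro x hx
    rw [huIcc] at hx
    have := (hfacts x hx).2.1
    linarith
  -- integrability of the integrand
  have hf_int : IntervalIntegrable (fun x =>
      (Real.sin (l * x) ^ 2 / (2 * l ^ 4) +
        |A₂| * (Real.cos (l * x) / Real.sin (l * x)) +
        |A₃| * |1 - l * x * (Real.cos (l * x) / Real.sin (l * x))|) *
      (l⁻¹ ^ 2 * Real.sin (l * x) ^ 2) * (x⁻¹) ^ 8) MeasureTheory.volume a b := by
    apply ContinuousOn.intervalIntegrable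
    have hsin : ContinuousOn (fun x : ℝ => Real.sin (l * x)) (Set.uIcc a b) :=
      (Real.continuous_sin.comp (continuous_const.mul continuous_id)).continuousOn
    have hcos : ContinuousOn (fun x : ℝ => Real.cos (l * x)) (Set.uIcc a b) :=
      (Real.continuous_cos.comp (continuous_const.mul continuous_id)).continuousOn
    have hdiv : ContinuousOn (fun x : ℝ => Real.cos (l * x) / Real.sin (l * x))
        (Set.uIcc a b) := hcos.div hsin hsne
    have hinv : ContinuousOn (fun x : ℝ => (x⁻¹ : ℝ)) (Set.uIcc a b) :=
      continuousOn_id.inv₀ hxne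
    exact (((((hsin.pow 2).div_const _).add (continuousOn_const.mul hdiv)).add
        (continuousOn_const.mul ((continuousOn_const.sub
          ((continuousOn_const.mul continuousOn_id).mul hdiv)).abs))).mul
      (continuousOn_const.mul (hsin.pow 2))).mul (hinv.pow 8)
  have hg_int : IntervalIntegrable (fun x : ℝ => 7 / 2 * l⁻¹ ^ 2 * x ^ (-4 : ℤ))
      MeasureTheory.volume a b := by
    apply IntervalIntegrable.const_mul
    apply intervalIntegral.intervalIntegrable_zpow
    right
    intro h0
    exact hxne 0 h0 rfl
  have hzero : (0:ℝ) ∉ Set.uIcc a b := fun h0 => hxne 0 h0 rfl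
  have hmono := intervalIntegral.integral_mono_on hab hf_int hg_int
    (fun x hx => by
      obtain ⟨hx1, hslb, hsub, hc0⟩ := hfacts x hx
      exact ptbd l x A₂ A₃ hl hl1 hA2 hA3 hx1 hslb hsub hc0 (Real.cos_le_one _))
  have hgval : (∫ x in a..b, 7 / 2 * l⁻¹ ^ 2 * x ^ (-4 : ℤ))
      = 7 / 2 * l⁻¹ ^ 2 * ((b ^ (-3 : ℤ) - a ^ (-3 : ℤ)) / (-3)) := by
    rw [intervalIntegral.integral_const_mul, integral_zpow (Or.inr ⟨by norm_num, hzero⟩)]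
    norm_num
  have ha0 : (0:ℝ) < a := lt_of_lt_of_le one_pos ha1
  have hb0 : (0:ℝ) < b := lt_of_lt_of_le ha0 hab
  have hbound : (b ^ (-3 : ℤ) - a ^ (-3 : ℤ)) / (-3 : ℝ) ≤ 1 / 3 := by
    rw [zpow_neg, zpow_neg, zpow_ofNat, zpow_ofNat]
    have h1 : (a ^ 3)⁻¹ ≤ 1 := by
      rw [inv_le_one_iff₀]
      right
      exact one_le_pow₀ ha1
    have h2 : (0:ℝ) ≤ (b ^ 3)⁻¹ := by positivity
    have e : ((b ^ 3)⁻¹ - (a ^ 3)⁻¹) / (-3 : ℝ) = ((a ^ 3)⁻¹ - (b ^ 3)⁻¹) / 3 := by ring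
    rw [e]
    linarith
  have hlpos : (0:ℝ) < l⁻¹ ^ 2 := by positivity
  calc (∫ x in a..b,
        (Real.sin (l * x) ^ 2 / (2 * l ^ 4) +
          |A₂| * (Real.cos (l * x) / Real.sin (l * x)) +
          |A₃| * |1 - l * x * (Real.cos (l * x) / Real.sin (l * x))|) *
        (l⁻¹ ^ 2 * Real.sin (l * x) ^ 2) * (x⁻¹) ^ 8)
      ≤ ∫ x in a..b, 7 / 2 * l⁻¹ ^ 2 * x ^ (-4 : ℤ) := hmono
    _ = 7 / 2 * l⁻¹ ^ 2 * ((b ^ (-3 : ℤ) - a ^ (-3 : ℤ)) / (-3)) := hgval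
    _ ≤ 2 * l⁻¹ ^ 2 := by nlinarith
end

section
/- There exist constants C > 0 and l_0 > 0 such that for all 0 < l < l_0, with a = arcsin(l)/l and b = π/l - arcsin(l)/l: ∫_{l^{-1/4}}^{b - l^{-1/4}} (l·cot(lx) + l·|1 - lx cot(lx)| + x^{-2}) · l^{-2} sin^2(lx) · (b - x)^{-8} dx ≤ C l. -/
open Real

lemma arcsin_le_two_mul {l : ℝ} (hl : 0 < l) (hl' : l ≤ 1/4) : Real.arcsin l ≤ 2 * l := by
  have h2l1 : 2 * l ≤ 1 := by linarith
  have hpi : (3:ℝ) < Real.pi := Real.pi_gt_three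
  have hsin : l ≤ Real.sin (2 * l) := by
    have h := Real.sin_gt_sub_cube (by linarith : (0:ℝ) < 2 * l)
    have hll : l ^ 2 ≤ 1 / 16 := by nlinarith
    nlinarith [mul_nonneg hl.le (sq_nonneg l)]
  calc Real.arcsin l ≤ Real.arcsin (Real.sin (2 * l)) := Real.monotone_arcsin hsin
    _ = 2 * l := Real.arcsin_sin (by linarith) (by linarith)

lemma ptwise_bound {l x b : ℝ} (hl : 0 < l) (hl' : l ≤ 1/4)
    (hx : 1 ≤ x) (hlx : 0 < l * x) (hlxpi : l * x < Real.pi)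
    (hu : 1 ≤ b - x) (hs3 : Real.sin (l * x) ≤ 3 * l * (b - x)) :
    (l * (Real.cos (l * x) / Real.sin (l * x)) +
        l * |1 - l * x * (Real.cos (l * x) / Real.sin (l * x))| + (x⁻¹) ^ 2) *
      (l⁻¹ ^ 2 * Real.sin (l * x) ^ 2) * ((b - x)⁻¹) ^ 8 ≤ 21 * ((b - x)⁻¹) ^ 7 := by
  set s := Real.sin (l * x) with hs_def
  set c := Real.cos (l * x) with hc_def
  set u := b - x with hu_def
  have hs : 0 < s := Real.sin_pos_of_pos_of_lt_pi hlx hlxpi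
  have hs1 : s ≤ 1 := Real.sin_le_one _
  have hc1 : c ≤ 1 := Real.cos_le_one _
  have hc1' : |c| ≤ 1 := Real.abs_cos_le_one _
  have hslx : s ≤ l * x := Real.sin_le hlx.le
  have hlxpi4 : l * x ≤ 4 := by
    have := Real.pi_lt_d2
    linarith
  have hupos : (0:ℝ) < u := by linarith
  have habs : |1 - l * x * (c / s)| * s ≤ s + l * x := by
    have h0 : (1 - l * x * (c / s)) * s = s - l * x * c := by
      field_simp
    have h1 : |1 - l * x * (c / s)| * s = |s - l * x * c| := by
      rw [show |1 - l * x * (c / s)| * s = |1 - l * x * (c / s)| * |s| by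
            rw [abs_of_pos hs], ← abs_mul, h0]
    rw [h1, sub_eq_add_neg]
    calc |s + -(l * x * c)| ≤ |s| + |-(l * x * c)| := abs_add_le _ _
      _ = s + l * x * |c| := by
          rw [abs_neg, abs_of_pos hs, abs_mul, abs_of_pos hlx]
      _ ≤ s + l * x := by nlinarith
  have hE : (l * (c / s) + l * |1 - l * x * (c / s)| + (x⁻¹) ^ 2) * (l⁻¹ ^ 2 * s ^ 2)
      ≤ 21 * u := by
    have e1 : l * (c / s) * (l⁻¹ ^ 2 * s ^ 2) = c * s / l := by
      field_simp
    have h1 : c * s / l ≤ 3 * u := by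
      rw [div_le_iff₀ hl]
      nlinarith [mul_le_mul_of_nonneg_right hc1 hs.le]
    have e2 : l * |1 - l * x * (c / s)| * (l⁻¹ ^ 2 * s ^ 2)
        = (|1 - l * x * (c / s)| * s) * (s / l) := by
      field_simp
    have hsl : s / l ≤ 3 * u := by rw [div_le_iff₀ hl]; linarith [hs3]
    have h2 : (|1 - l * x * (c / s)| * s) * (s / l) ≤ 15 * u := by
      calc (|1 - l * x * (c / s)| * s) * (s / l) ≤ (s + l * x) * (s / l) := by
            apply mul_le_mul_of_nonneg_right habs (by positivity)
        _ ≤ 5 * (3 * u) := by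
            apply mul_le_mul (by linarith) hsl (by positivity) (by norm_num)
        _ = 15 * u := by ring
    have e3 : (x⁻¹) ^ 2 * (l⁻¹ ^ 2 * s ^ 2) = (s / (l * x)) ^ 2 := by
      field_simp
    have h3 : (s / (l * x)) ^ 2 ≤ 3 * u := by
      have hq : s / (l * x) ≤ 1 := by rw [div_le_one hlx]; exact hslx
      have hq0 : (0:ℝ) ≤ s / (l * x) := by positivity
      nlinarith
    have expand : (l * (c / s) + l * |1 - l * x * (c / s)| + (x⁻¹) ^ 2) * (l⁻¹ ^ 2 * s ^ 2)
        = l * (c / s) * (l⁻¹ ^ 2 * s ^ 2) + l * |1 - l * x * (c / s)| * (l⁻¹ ^ 2 * s ^ 2)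
          + (x⁻¹) ^ 2 * (l⁻¹ ^ 2 * s ^ 2) := by ring
    rw [expand, e1, e2, e3]
    linarith
  have h8 : (0:ℝ) ≤ (u⁻¹) ^ 8 := by positivity
  calc (l * (c / s) + l * |1 - l * x * (c / s)| + (x⁻¹) ^ 2) * (l⁻¹ ^ 2 * s ^ 2) * (u⁻¹) ^ 8
      ≤ 21 * u * (u⁻¹) ^ 8 := mul_le_mul_of_nonneg_right hE h8
    _ = 21 * (u⁻¹) ^ 7 := by
        field_simp

theorem middle_interval_estimate :
    ∃ C : ℝ, 0 < C ∧ ∃ l₀ : ℝ, 0 < l₀ ∧ ∀ l : ℝ, 0 < l → l < l₀ →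
      (∫ x in (l ^ (-(1/4 : ℝ)))..((Real.pi / l - Real.arcsin l / l) - l ^ (-(1/4 : ℝ))),
        (l * (Real.cos (l * x) / Real.sin (l * x)) +
            l * |1 - l * x * (Real.cos (l * x) / Real.sin (l * x))| + (x⁻¹) ^ 2) *
          (l⁻¹ ^ 2 * Real.sin (l * x) ^ 2) *
          ((Real.pi / l - Real.arcsin l / l - x)⁻¹) ^ 8) ≤ C * l := by
  refine ⟨4, by norm_num, 1/4, by norm_num, fun l hl hl' => ?_⟩
  have hl4 : l ≤ 1/4 := hl'.le
  have hl1 : l ≤ 1 := by linarith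
  set A := l ^ (-(1/4:ℝ)) with hA_def
  set b := Real.pi / l - Real.arcsin l / l with hb_def
  clear_value A b
  have hpi : (3:ℝ) < Real.pi := Real.pi_gt_three
  have hpi' : Real.pi < 3.15 := by
    have := Real.pi_lt_d2; linarith
  have harc_pos : 0 < Real.arcsin l := Real.arcsin_pos.mpr hl
  have harc2 : Real.arcsin l ≤ 2 * l := arcsin_le_two_mul hl hl4
  have hA1 : (1:ℝ) ≤ A := by
    rw [hA_def]
    exact Real.one_le_rpow_of_pos_of_le_one_of_nonpos hl hl1 (by norm_num)
  have hApos : (0:ℝ) < A := lt_of_lt_of_le one_pos hA1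
  have hlb : l * b = Real.pi - Real.arcsin l := by
    rw [hb_def]; field_simp
  have hAl : A * l ≤ 1/2 := by
    have hAl_eq : A * l = l ^ ((3:ℝ)/4) := by
      rw [hA_def]
      nth_rewrite 2 [← Real.rpow_one l]
      rw [← Real.rpow_add hl]
      norm_num
    have h1 : l ^ ((3:ℝ)/4) ≤ (1/4:ℝ) ^ ((3:ℝ)/4) :=
      Real.rpow_le_rpow hl.le hl4 (by norm_num)
    have h2 : ((1/4:ℝ)) ^ ((3:ℝ)/4) ≤ 1/2 := by
      have he : ((1/4:ℝ)) ^ ((3:ℝ)/4) = (1/2:ℝ) ^ ((3:ℝ)/2) := by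
        rw [show (1/4:ℝ) = ((1/2:ℝ))^(2:ℕ) by norm_num, ← Real.rpow_natCast (1/2:ℝ) 2,
          ← Real.rpow_mul (by norm_num)]
        norm_num
      rw [he]
      calc (1/2:ℝ) ^ ((3:ℝ)/2) ≤ (1/2:ℝ) ^ (1:ℝ) :=
            Real.rpow_le_rpow_of_exponent_ge (by norm_num) (by norm_num) (by norm_num)
        _ = 1/2 := Real.rpow_one _
    linarith [hAl_eq ▸ h1.trans h2]
  have hb_lower : 2/l ≤ b := by
    have h2 : 2 ≤ l * b := by linarith
    rw [div_le_iff₀ hl]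
    linarith [mul_comm l b]
  have hab : A ≤ b - A := by
    have h1 : 2*A ≤ 1/l := by rw [le_div_iff₀ hl]; linarith
    have h2 : 1/l ≤ 2/l := by rw [div_le_div_iff₀ hl hl]; linarith
    linarith
  have hbA : (0:ℝ) < b - A := by linarith
  -- facts on the interval
  have hmem : ∀ x ∈ Set.Icc A (b - A), 1 ≤ x ∧ 0 < l * x ∧ l * x < Real.pi ∧ 1 ≤ b - x := by
    intro x hx
    obtain ⟨hx1, hx2⟩ := hx
    have h1 : 1 ≤ x := le_trans hA1 hx1
    have hx0 : (0:ℝ) < x := lt_of_lt_of_le one_pos h1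
    have h2 : 0 < l * x := mul_pos hl hx0
    have h3 : l * x < Real.pi := by
      have hm : l * x ≤ l * (b - A) := mul_le_mul_of_nonneg_left hx2 hl.le
      have e : l * (b - A) = l * b - l * A := by ring
      have hlA : 0 < l * A := mul_pos hl hApos
      linarith
    have h4 : 1 ≤ b - x := by linarith
    exact ⟨h1, h2, h3, h4⟩
  have hsne : ∀ x ∈ Set.Icc A (b - A), Real.sin (l * x) ≠ 0 := fun x hx =>
    (Real.sin_pos_of_pos_of_lt_pi (hmem x hx).2.1 (hmem x hx).2.2.1).ne'
  have hxne : ∀ x ∈ Set.Icc A (b - A), x ≠ 0 := fun x hx => by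
    have := (hmem x hx).1; intro h; rw [h] at this; linarith
  have hbne : ∀ x ∈ Set.Icc A (b - A), b - x ≠ 0 := fun x hx => by
    have := (hmem x hx).2.2.2; intro h; rw [h] at this; linarith
  -- pointwise bound
  have hpt : ∀ x ∈ Set.Icc A (b - A),
      (l * (Real.cos (l * x) / Real.sin (l * x)) +
          l * |1 - l * x * (Real.cos (l * x) / Real.sin (l * x))| + (x⁻¹) ^ 2) *
        (l⁻¹ ^ 2 * Real.sin (l * x) ^ 2) * ((b - x)⁻¹) ^ 8 ≤ 21 * ((b - x)⁻¹) ^ 7 := by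
    intro x hx
    obtain ⟨h1, h2, h3, h4⟩ := hmem x hx
    have hs3 : Real.sin (l * x) ≤ 3 * l * (b - x) := by
      have e1 : Real.sin (l * x) = Real.sin (Real.pi - l * x) := (Real.sin_pi_sub _).symm
      have e2 : Real.sin (Real.pi - l * x) ≤ Real.pi - l * x := Real.sin_le (by linarith)
      have e3 : Real.pi - l * x = l * (b - x) + Real.arcsin l := by
        rw [mul_sub, hlb]; ring
      have e4 : l * 1 ≤ l * (b - x) := mul_le_mul_of_nonneg_left h4 hl.le
      nlinarith
    exact ptwise_bound hl hl4 h1 h2 h3 h4 hs3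
  -- integrability
  have hcontf : ContinuousOn (fun x =>
      (l * (Real.cos (l * x) / Real.sin (l * x)) +
          l * |1 - l * x * (Real.cos (l * x) / Real.sin (l * x))| + (x⁻¹) ^ 2) *
        (l⁻¹ ^ 2 * Real.sin (l * x) ^ 2) * ((b - x)⁻¹) ^ 8) (Set.Icc A (b - A)) := by
    have hcos : Continuous fun x : ℝ => Real.cos (l * x) :=
      Real.continuous_cos.comp (continuous_const.mul continuous_id)
    have hsin : Continuous fun x : ℝ => Real.sin (l * x) :=
      Real.continuous_sin.comp (continuous_const.mul continuous_id)
    have hdiv : ContinuousOn (fun x => Real.cos (l * x) / Real.sin (l * x)) (Set.Icc A (b - A)) :=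
      hcos.continuousOn.div hsin.continuousOn hsne
    apply ContinuousOn.mul
    apply ContinuousOn.mul
    · apply ContinuousOn.add
      apply ContinuousOn.add
      · exact continuousOn_const.mul hdiv
      · exact continuousOn_const.mul
          ((continuousOn_const.sub (((continuous_const.mul continuous_id).continuousOn).mul hdiv)).abs)
      · exact (continuousOn_id.inv₀ hxne).pow 2
    · exact continuousOn_const.mul (hsin.continuousOn.pow 2)
    · exact ((continuousOn_const.sub continuousOn_id).inv₀ hbne).pow 8
  have hcontg : ContinuousOn (fun x => 21 * ((b - x)⁻¹) ^ 7) (Set.Icc A (b - A)) :=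
    continuousOn_const.mul (((continuousOn_const.sub continuousOn_id).inv₀ hbne).pow 7)
  have hIf : IntervalIntegrable (fun x =>
      (l * (Real.cos (l * x) / Real.sin (l * x)) +
          l * |1 - l * x * (Real.cos (l * x) / Real.sin (l * x))| + (x⁻¹) ^ 2) *
        (l⁻¹ ^ 2 * Real.sin (l * x) ^ 2) * ((b - x)⁻¹) ^ 8)
      MeasureTheory.volume A (b - A) := by
    apply ContinuousOn.intervalIntegrable
    rwa [Set.uIcc_of_le hab]
  have hIg : IntervalIntegrable (fun x => 21 * ((b - x)⁻¹) ^ 7)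
      MeasureTheory.volume A (b - A) := by
    apply ContinuousOn.intervalIntegrable
    rwa [Set.uIcc_of_le hab]
  -- compute the integral of g
  have hzero : (0:ℝ) ∉ Set.uIcc A (b - A) := by
    rw [Set.uIcc_of_le hab]
    rintro ⟨h0, -⟩
    linarith
  have hint7 : (fun u : ℝ => (u⁻¹) ^ 7) = fun u : ℝ => u ^ (-7 : ℤ) := by
    funext u
    rw [inv_pow, ← zpow_natCast u 7, ← zpow_neg]
    norm_num
  have hg_int : (∫ x in A..(b - A), 21 * ((b - x)⁻¹) ^ 7)
      = 21 * (((b - A) ^ (-6 : ℤ) - A ^ (-6 : ℤ)) / (-6 : ℝ)) := by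
    rw [intervalIntegral.integral_const_mul]
    congr 1
    calc (∫ x in A..(b - A), ((b - x)⁻¹) ^ 7)
        = ∫ u in (b - (b - A))..(b - A), (u⁻¹) ^ 7 :=
          intervalIntegral.integral_comp_sub_left (fun u => (u⁻¹) ^ 7) b
      _ = ∫ u in A..(b - A), (u⁻¹) ^ 7 := by rw [show b - (b - A) = A by ring]
      _ = ∫ u in A..(b - A), u ^ (-7 : ℤ) := by rw [hint7]
      _ = ((b - A) ^ (-6 : ℤ) - A ^ (-6 : ℤ)) / (-6 : ℝ) := by
          rw [integral_zpow (Or.inr ⟨by norm_num, hzero⟩)]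
          norm_num
  -- put things together
  have hmono := intervalIntegral.integral_mono_on hab hIf hIg hpt
  have hX : (0:ℝ) ≤ (b - A) ^ (-6 : ℤ) := zpow_nonneg hbA.le _
  have hY : A ^ (-6 : ℤ) = l ^ ((3:ℝ)/2) := by
    rw [hA_def, ← Real.rpow_intCast (l ^ (-(1/4:ℝ))) (-6), ← Real.rpow_mul hl.le]
    norm_num
  have hY2 : l ^ ((3:ℝ)/2) ≤ l := by
    calc l ^ ((3:ℝ)/2) ≤ l ^ (1:ℝ) :=
          Real.rpow_le_rpow_of_exponent_ge hl hl1 (by norm_num)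
      _ = l := Real.rpow_one l
  calc (∫ x in A..(b - A),
        (l * (Real.cos (l * x) / Real.sin (l * x)) +
            l * |1 - l * x * (Real.cos (l * x) / Real.sin (l * x))| + (x⁻¹) ^ 2) *
          (l⁻¹ ^ 2 * Real.sin (l * x) ^ 2) * ((b - x)⁻¹) ^ 8)
      ≤ ∫ x in A..(b - A), 21 * ((b - x)⁻¹) ^ 7 := hmono
    _ = 21 * (((b - A) ^ (-6 : ℤ) - A ^ (-6 : ℤ)) / (-6 : ℝ)) := hg_int
    _ = (A ^ (-6 : ℤ) - (b - A) ^ (-6 : ℤ)) * (7/2) := by ring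
    _ ≤ A ^ (-6 : ℤ) * (7/2) := by nlinarith
    _ = l ^ ((3:ℝ)/2) * (7/2) := by rw [hY]
    _ ≤ 4 * l := by linarith
end
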